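/- Let F : F_{p^n} → F_{p^n} be quadratic with n ≥ 4. Suppose every nonzero component function Tr(bF) (b ≠ 0) is non-constant up to affine terms in the sense that |W_{Tr(bF)}| < p^n (equivalently, the linear kernel of Tr(bF) has dimension < n for every b ≠ 0), and that the differential uniformity satisfies Δ_F ≤ p^{n-3}. Then for any β ∈ F_{p^n} with β ≠ 0, any γ ∈ F_{p^n} with γ ≠ 0, and any α ∈ F_{p^n}, the function x ↦ Tr(αx + βF(x))·D_γF(x) has algebraic degree exactly 3. -/

import Mathlib

/-! Write `B` for the polar form of the quadratic map `F` and `φ(a, b) = Tr(β B(a, b))`. The third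
derivative of `Tr(αx + βF(x)) • D_γF(x)` in the directions `a, b, c` is the cyclic sum
`φ(a, b) B(γ, c) + φ(b, c) B(γ, a) + φ(c, a) B(γ, b)`, so the degree is at most `3`. If it were at
most `2`, the cyclic sum would vanish; taking `u, v` with `φ(u, v) ≠ 0`, which exist because
`Tr(βF)` is not affine, `B(γ, ·)` then vanishes on the kernel of `c ↦ (φ(v, c), φ(c, u)) ∈ 𝔽_p²`.
Hence `p^n ≤ p² · #ker B(γ, ·)`, whereas `ker B(γ, ·)` is a fibre of `D_γF`, of size at most
`p^(n-3)`. -/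

/-- A function has algebraic degree at most `d` iff all `(d+1)`-fold discrete
derivatives vanish identically. -/
def degLE {V W : Type*} [AddCommGroup V] [AddCommGroup W] : (V → W) → ℕ → Prop
  | F, 0 => ∀ γ x, F (x + γ) - F x = 0
  | F, (d + 1) => ∀ γ, degLE (fun x => F (x + γ) - F x) d

section Degree

variable {V W W' : Type*} [AddCommGroup V] [AddCommGroup W] [AddCommGroup W']

theorem degLE_zero_iff {F : V → W} : degLE F 0 ↔ ∀ x, F x = F 0 :=
  ⟨fun hF x => by simpa [sub_eq_zero] using hF x 0,
   fun hF γ x => by rw [hF (x + γ), hF x, sub_self]⟩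

theorem degLE.succ {F : V → W} {d : ℕ} (hF : degLE F d) : degLE F (d + 1) := by
  induction d generalizing F with
  | zero => exact fun γ γ' x => by beta_reduce; rw [hF γ (x + γ'), hF γ x, sub_self]
  | succ d ih => exact fun γ => ih (hF γ)

theorem degLE.mono {F : V → W} {d e : ℕ} (hF : degLE F d) (h : d ≤ e) : degLE F e := by
  induction h with
  | refl => exact hF
  | step _ ih => exact ih.succ

theorem degLE.add {F G : V → W} {d : ℕ} (hF : degLE F d) (hG : degLE G d) :
    degLE (fun x => F x + G x) d := by
  induction d generalizing F G with
  | zero => exact fun γ x => by beta_reduce; rw [add_sub_add_comm, hF γ x, hG γ x, add_zero]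
  | succ d ih =>
      intro γ
      convert ih (hF γ) (hG γ) using 2
      beta_reduce
      abel

theorem degLE.map (φ : W →+ W') {F : V → W} {d : ℕ} (hF : degLE F d) :
    degLE (fun x => φ (F x)) d := by
  induction d generalizing F with
  | zero => exact fun γ x => by rw [← map_sub, hF γ x, map_zero]
  | succ d ih =>
      intro γ
      convert ih (hF γ) using 2
      exact (map_sub φ _ _).symm

theorem degLE.comp_add_right {F : V → W} {d : ℕ} (hF : degLE F d) (c : V) :
    degLE (fun x => F (x + c)) d := by
  induction d generalizing F with
  | zero => exact fun γ x => by beta_reduce; rw [add_right_comm]; exact hF γ (x + c)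
  | succ d ih =>
      intro γ
      convert ih (hF γ) using 2
      rw [add_right_comm]

theorem AddMonoidHom.degLE_one (φ : V →+ W) : degLE φ 1 := fun γ =>
  degLE_zero_iff.mpr fun x => by simp

theorem degLE.smul {R M : Type*} [Ring R] [AddCommGroup M] [Module R M] {f : V → R} {g : V → M}
    {m k : ℕ} (hf : degLE f m) (hg : degLE g k) : degLE (fun x => f x • g x) (m + k) := by
  induction m generalizing k f g with
  | zero =>
      have hconst := degLE_zero_iff.mp hf
      simpa only [zero_add, hconst, DistribSMul.toAddMonoidHom_apply] using
        hg.map (DistribSMul.toAddMonoidHom M (f 0))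
  | succ m ihm =>
    induction k generalizing f g with
    | zero =>
        have hconst := degLE_zero_iff.mp hg
        simpa only [hconst, AddMonoidHom.flip_apply, smulAddHom_apply] using
          hf.map ((smulAddHom R M).flip (g 0))
    | succ k ihk =>
        intro γ
        show degLE _ (m + 1 + k)
        have hleft := ihm (hf γ) (hg.comp_add_right γ)
        rw [show m + (k + 1) = m + 1 + k by omega] at hleft
        have hsplit := hleft.add (ihk hf (hg γ))
        convert hsplit using 2
        rw [sub_smul, smul_sub]
        abel

theorem degLE.apply_add {g : V → W} (hg : degLE g 1) (x c : V) :
    g (x + c) = g x + (g c - g 0) := by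
  have h := hg c x 0
  simp only [zero_add] at h
  exact eq_add_of_sub_eq' (sub_eq_zero.mp h)

end Degree

section Polar

variable {V W : Type*} [AddCommGroup V] [AddCommGroup W]

def polar (F : V → W) (a b : V) : W := F (a + b) - F a - F b + F 0

theorem polar_comm (F : V → W) (a b : V) : polar F a b = polar F b a := by
  rw [polar, polar, add_comm a b, sub_right_comm _ (F a)]

theorem sub_eq_polar_add (F : V → W) (a x : V) :
    F (x + a) - F x = polar F a x + (F a - F 0) := by
  rw [polar, add_comm x a]
  abel

theorem degLE.apply_add_add {F : V → W} (hF : degLE F 2) (x a b : V) :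
    F (x + a + b) = F (x + a) + F (x + b) - F x + polar F a b := by
  have h := hF b a x 0
  simp only [zero_add] at h
  rw [polar]
  linear_combination (norm := abel) h

theorem degLE.polar_smul_cyclic_eq_zero {R M : Type*} [CommRing R] [AddCommGroup M] [Module R M]
    {f : V → R} {g : V → M} (hf : degLE f 2) (hg : degLE g 1)
    (hfg : degLE (fun x => f x • g x) 2) (a b c : V) :
    polar f a b • (g c - g 0) + polar f b c • (g a - g 0) + polar f c a • (g b - g 0) = 0 := by
  have h := hfg a b c 0
  simp only [zero_add] at h
  have hba := hf.apply_add_add 0 b a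
  have hcb := hf.apply_add_add 0 c b
  have hca := hf.apply_add_add 0 c a
  simp only [zero_add] at hba hcb hca
  rw [hf.apply_add_add c b a, hba, hcb, hca, hg.apply_add (c + b) a, hg.apply_add c b,
    hg.apply_add c a, hg.apply_add b a] at h
  rw [polar_comm f a b, polar_comm f b c]
  linear_combination (norm := module) h

theorem exists_map_polar_ne_zero {K : Type*} [AddCommGroup K] (T : W →+ K) (F : V → W) {u : V}
    (hu : ¬ ∃ c, ∀ x, T (F (x + u) - F x) = c) : ∃ v, T (polar F u v) ≠ 0 := by
  by_contra! h
  exact hu ⟨T (F u - F 0), fun x => by rw [sub_eq_polar_add, map_add, h x, zero_add]⟩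

theorem degLE.polar_add_right {F : V → W} (hF : degLE F 2) (a b c : V) :
    polar F a (b + c) = polar F a b + polar F a c := by
  rw [polar, polar, ← add_assoc, add_comm a b, hF.apply_add_add, add_comm b a]
  abel

def polarHom {F : V → W} (hF : degLE F 2) : V →+ V →+ W :=
  AddMonoidHom.mk' (fun a => AddMonoidHom.mk' (polar F a) (hF.polar_add_right a)) fun a a' => by
    ext b
    simp only [AddMonoidHom.mk'_apply, AddMonoidHom.add_apply, polar_comm F _ b,
      hF.polar_add_right]

theorem polarHom_apply {F : V → W} (hF : degLE F 2) (a b : V) :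
    polarHom hF a b = polar F a b := rfl

theorem coe_ker_polarHom {F : V → W} (hF : degLE F 2) (a : V) :
    ((polarHom hF a).ker : Set V) = {x | F (x + a) - F x = F a - F 0} := by
  ext x
  simp [polarHom_apply, sub_eq_polar_add]

end Polar

section Counting

theorem AddMonoidHom.card_le_card_ker_mul {V H M : Type*} [AddCommGroup V] [AddCommGroup H]
    [AddCommGroup M] [Finite V] [Finite H] (ψ : V →+ H) (L : V →+ M) (h : ψ.ker ≤ L.ker) :
    Nat.card V ≤ Nat.card L.ker * Nat.card H := by
  rw [← ψ.ker.card_mul_index, AddSubgroup.index_ker]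
  exact Nat.mul_le_mul (AddSubgroup.card_le_of_le h) (Finite.card_subtype_le _)

variable {V K M : Type*} [Field K] [AddCommGroup M] [Module K M]

theorem eq_zero_of_cyclic_smul {φ : V → V → K} {L : V → M}
    (h : ∀ a b c, φ a b • L c + φ b c • L a + φ c a • L b = 0) {u v c : V} (huv : φ u v ≠ 0)
    (hvc : φ v c = 0) (hcu : φ c u = 0) : L c = 0 := by
  have huvc := h u v c
  rw [hvc, hcu, zero_smul, zero_smul, add_zero, add_zero, smul_eq_zero] at huvc
  exact huvc.resolve_left huv

theorem card_le_card_ker_mul_sq_of_cyclic_smul [AddCommGroup V] [Finite V] [Finite K]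
    (φ : V →+ V →+ K) (L : V →+ M) (h : ∀ a b c, φ a b • L c + φ b c • L a + φ c a • L b = 0)
    {u v : V} (huv : φ u v ≠ 0) : Nat.card V ≤ Nat.card L.ker * Nat.card K ^ 2 := by
  have hker : ((φ v).prod (φ.flip u)).ker ≤ L.ker := fun c hc => by
    rw [AddMonoidHom.mem_ker, AddMonoidHom.prod_apply, Prod.mk_eq_zero] at hc
    exact eq_zero_of_cyclic_smul h huv hc.1 hc.2
  simpa only [Nat.card_prod, sq] using ((φ v).prod (φ.flip u)).card_le_card_ker_mul L hker

end Counting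

/-- For a quadratic `F` with nonzero nonlinearity (every nonzero component function has a
proper linear kernel) and differential uniformity at most `p^{n-3}`, the product
`Tr(αx + βF(x))·D_γF(x)` has algebraic degree exactly `3`. -/
theorem product_has_degree_three
    (p n : ℕ) [Fact p.Prime] (hn : 4 ≤ n)
    (F : GaloisField p n → GaloisField p n)
    (hquad : degLE F 2 ∧ ¬ degLE F 1)
    (hNL : ∀ b : GaloisField p n, b ≠ 0 →
      ∃ γ : GaloisField p n, ¬ ∃ c : ZMod p, ∀ x,
        Algebra.trace (ZMod p) (GaloisField p n) (b * (F (x + γ) - F x)) = c)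
    (hΔ : ∀ a : GaloisField p n, a ≠ 0 → ∀ b : GaloisField p n,
      Nat.card {x : GaloisField p n | F (x + a) - F x = b} ≤ p ^ (n - 3)) :
    ∀ (β : GaloisField p n), β ≠ 0 → ∀ (γ : GaloisField p n), γ ≠ 0 →
      ∀ (α : GaloisField p n),
        degLE (fun x => Algebra.trace (ZMod p) (GaloisField p n) (α * x + β * F x)
                • (F (x + γ) - F x)) 3
        ∧ ¬ degLE (fun x => Algebra.trace (ZMod p) (GaloisField p n) (α * x + β * F x)
                • (F (x + γ) - F x)) 2 := by
  intro β hβ γ hγ α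
  set Tr := (Algebra.trace (ZMod p) (GaloisField p n)).toAddMonoidHom
  obtain ⟨hF, -⟩ := hquad
  have hf : degLE (fun x => Tr (α * x + β * F x)) 2 :=
    (((AddMonoidHom.mulLeft α).degLE_one.mono one_le_two).add
      (hF.map (AddMonoidHom.mulLeft β))).map Tr
  refine ⟨hf.smul (hF γ), fun hfg => ?_⟩
  set φ := (polarHom hF).compr₂ (Tr.comp (AddMonoidHom.mulLeft β))
  have polar_f : ∀ a b, polar (fun x => Tr (α * x + β * F x)) a b = φ a b := fun a b => by
    simp only [φ, polar, AddMonoidHom.compr₂_apply, polarHom_apply, AddMonoidHom.comp_apply,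
      AddMonoidHom.coe_mulLeft, ← map_sub, ← map_add]
    congr 1
    ring
  have polar_g : ∀ c, F (c + γ) - F c - (F (0 + γ) - F 0) = polarHom hF γ c := fun c => by
    rw [sub_eq_polar_add, zero_add, add_sub_cancel_right, polarHom_apply]
  have hcyc := hf.polar_smul_cyclic_eq_zero (hF γ) hfg
  simp only [polar_f, polar_g] at hcyc
  obtain ⟨u, hu⟩ := hNL β hβ
  obtain ⟨v, huv⟩ := exists_map_polar_ne_zero (Tr.comp (AddMonoidHom.mulLeft β)) F hu
  have hcard := card_le_card_ker_mul_sq_of_cyclic_smul φ (polarHom hF γ) hcyc huv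
  have hker : Nat.card (polarHom hF γ).ker ≤ p ^ (n - 3) := by
    have hΔγ := hΔ γ hγ (F γ - F 0)
    rwa [← coe_ker_polarHom hF γ] at hΔγ
  rw [GaloisField.card p n (by omega), Nat.card_zmod] at hcard
  have hlt : p ^ n < p ^ n := calc
    p ^ n ≤ p ^ (n - 3) * p ^ 2 := hcard.trans (Nat.mul_le_mul_right _ hker)
    _ = p ^ (n - 1) := by rw [← pow_add]; congr 1; omega
    _ < p ^ n := Nat.pow_lt_pow_right (Fact.out : p.Prime).one_lt (by omega)
  exact lt_irrefl _ hlt
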